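/- arXiv:2009.12205 — 2 statements merged into one kernel-verified Lean document; each statement's English description precedes it below -/
import Mathlib

section
/- For the symmetric K₇ embedding with displacement vectors 7 copies each of (1/7)(1,3), (3/7, 2/7), (−2/7, 1/7) and stress values 2, −1, 3 respectively on the three classes, the resulting covariance matrix ΔΩΔᵀ has determinant 1 (αβ − γ² = 1), so this non-positive stress is an orthogonal reciprocal stress on some flat torus. -/
open Matrix

set_option maxHeartbeats 1000000 in
theorem K7_nonpositive_stress_det_one
    (Δ : Matrix (Fin 2) (Fin 21) ℝ)
    (hΔ : ∀ i e, Δ i e =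
      if (e : ℕ) < 7 then ![(1:ℝ)/7, 3/7] i
      else if (e : ℕ) < 14 then ![(3:ℝ)/7, 2/7] i
      else ![(-2:ℝ)/7, 1/7] i)
    (ω : Fin 21 → ℝ)
    (hω : ∀ e, ω e = if (e : ℕ) < 7 then 2 else if (e : ℕ) < 14 then -1 else 3) :
    (Δ * Matrix.diagonal ω * Δᵀ).det = 1 := by
  have h : ∀ i j : Fin 2, (Δ * Matrix.diagonal ω * Δᵀ) i j
      = ∑ e : Fin 21, Δ i e * ω e * Δ j e := by
    intro i j
    conv_lhs => rw [Matrix.mul_apply]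
    simp only [Matrix.mul_diagonal, Matrix.transpose_apply]
  rw [Matrix.det_fin_two, h, h, h, h]
  simp only [hΔ, hω]
  norm_num [Fin.sum_univ_succ]
end

section
/- For the symmetric K₇ embedding with displacement vectors as above and stress values 1, 1, −1 on the three edge classes (v₁ = (1/7,3/7), v₂ = (3/7,2/7), v₃ = (−2/7,1/7)), the covariance matrix ΔΩΔᵀ has determinant −1; hence for every nonzero scalar c, det of the covariance matrix of c·ω equals −c² < 0 ≠ 1, so no scaling of this stress is an orthogonal reciprocal stress on any flat torus. -/
open Matrix

theorem K7_stress_det_neg_one_no_scaling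
    (Δ : Matrix (Fin 2) (Fin 21) ℝ)
    (hΔ : ∀ i e, Δ i e =
      if (e : ℕ) < 7 then ![(1:ℝ)/7, 3/7] i
      else if (e : ℕ) < 14 then ![(3:ℝ)/7, 2/7] i
      else ![(-2:ℝ)/7, 1/7] i)
    (ω : Fin 21 → ℝ)
    (hω : ∀ e, ω e = if (e : ℕ) < 7 then 1 else if (e : ℕ) < 14 then 1 else -1) :
    (Δ * Matrix.diagonal ω * Δᵀ).det = -1 ∧
    ∀ c : ℝ, c ≠ 0 →
      (Δ * Matrix.diagonal (fun e => c * ω e) * Δᵀ).det = -c ^ 2 ∧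
      (Δ * Matrix.diagonal (fun e => c * ω e) * Δᵀ).det ≠ 1 := by
  have hentry : ∀ (w : Fin 21 → ℝ) (i j : Fin 2),
      (Δ * Matrix.diagonal w * Δᵀ) i j = ∑ e, Δ i e * w e * Δ j e := by
    intro w i j
    rw [Matrix.mul_apply]
    refine Finset.sum_congr rfl fun e _ => ?_
    rw [Matrix.mul_diagonal, Matrix.transpose_apply]
  have hdet : (Δ * Matrix.diagonal ω * Δᵀ).det = -1 := by
    rw [Matrix.det_fin_two, hentry, hentry, hentry, hentry]
    simp only [hΔ, hω, Fin.sum_univ_succ]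
    norm_num
  have hsmul : ∀ c : ℝ, Δ * Matrix.diagonal (fun e => c * ω e) * Δᵀ
      = c • (Δ * Matrix.diagonal ω * Δᵀ) := by
    intro c
    have : Matrix.diagonal (fun e => c * ω e) = c • Matrix.diagonal ω := by
      ext i j
      by_cases h : i = j <;> simp [Matrix.diagonal_apply, h]
    rw [this, Matrix.mul_smul, Matrix.smul_mul]
  refine ⟨hdet, fun c hc => ?_⟩
  have hdc : (Δ * Matrix.diagonal (fun e => c * ω e) * Δᵀ).det = -c ^ 2 := by
    rw [hsmul, Matrix.det_smul, hdet]
    simp [Fintype.card_fin]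
  refine ⟨hdc, ?_⟩
  rw [hdc]
  have : (0:ℝ) < c ^ 2 := by positivity
  nlinarith
end
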